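/- Let 0 < q < 1, u, v > 0, α > 0, and let f(x) = ∑_{n≥0} A_n x^n with (A_n) a bounded sequence. If u/v < 1 (so the relevant series converge absolutely), then N_q(x^{α-1} f(x))(u;v) = ((1-q)^{α-1} u^{α-1}/v^α) ∑_{n≥0} A_n (u/v)^n (1-q)^n Γ_q(α+n). -/

import Mathlib

/-!
With `r = u / v`, the double series `∑ₖ ∑ₙ qᵏ Aₙ (r qᵏ)^(α+n-1) / (q;q)ₖ` is dominated by
`C r^(α-1) rⁿ (q^α)ᵏ / (q;q)_∞`, so the q-Natural transform may be taken term by term and the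
theorem reduces to the power `x^(β-1)`, `β = α + n`. Its transform is
`(q;q)_∞ / v · r^(β-1) · ∑ₖ (q^β)ᵏ / (q;q)ₖ`, and Euler's identity `∑ₖ zᵏ / (q;q)ₖ = 1 / (z;q)_∞`
turns it into `(1-q)^(β-1) u^(β-1) / v^β · Γ_q(β)`. Euler's identity in turn comes from
`(1 - z) e_q(z) = e_q(qz)`: iterating gives `(z;q)ₘ e_q(z) = e_q(qᵐ z)`, which tends to
`e_q(0) = 1` by continuity of `e_q`.
-/

/-- The q-Pochhammer symbol `(a;q)_n`. -/
noncomputable def qPoch (q a : ℝ) (n : ℕ) : ℝ := ∏ k ∈ Finset.range n, (1 - a * q ^ k)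

/-- `(a;q)_∞`. -/
noncomputable def qPochInf (q a : ℝ) : ℝ := ∏' k : ℕ, (1 - a * q ^ k)

/-- The first-type q-Natural transform. -/
noncomputable def qNatural (q : ℝ) (f : ℝ → ℝ) (u v : ℝ) : ℝ :=
  qPochInf q q / v * ∑' k : ℕ, q ^ k * f (u / v * q ^ k) / qPoch q q k

/-- The q-gamma function. -/
noncomputable def qGamma (q x : ℝ) : ℝ :=
  qPochInf q q / qPochInf q (q ^ x) * (1 - q) ^ (1 - x)

open Filter Topology Set

section QPochhammer

variable {q a : ℝ}

lemma one_sub_mul_pow_pos (hq0 : 0 ≤ q) (hq1 : q ≤ 1) (ha0 : 0 ≤ a) (ha1 : a < 1) (k : ℕ) :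
    0 < 1 - a * q ^ k := by
  have : a * q ^ k ≤ a := mul_le_of_le_one_right ha0 (pow_le_one₀ hq0 hq1)
  linarith

lemma qPoch_zero (q a : ℝ) : qPoch q a 0 = 1 := Finset.prod_range_zero _

lemma qPoch_succ (q a : ℝ) (n : ℕ) : qPoch q a (n + 1) = qPoch q a n * (1 - a * q ^ n) :=
  Finset.prod_range_succ _ _

lemma qPoch_pos (hq0 : 0 ≤ q) (hq1 : q ≤ 1) (ha0 : 0 ≤ a) (ha1 : a < 1) (n : ℕ) :
    0 < qPoch q a n :=
  Finset.prod_pos fun k _ => one_sub_mul_pow_pos hq0 hq1 ha0 ha1 k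

lemma qPoch_antitone (hq0 : 0 ≤ q) (hq1 : q ≤ 1) (ha0 : 0 ≤ a) (ha1 : a < 1) :
    Antitone (qPoch q a) :=
  antitone_nat_of_succ_le fun n => by
    rw [qPoch_succ]
    refine mul_le_of_le_one_right (qPoch_pos hq0 hq1 ha0 ha1 n).le ?_
    have : 0 ≤ a * q ^ n := mul_nonneg ha0 (pow_nonneg hq0 n)
    linarith

lemma summable_log_one_sub_mul_pow (hq0 : 0 ≤ q) (hq1 : q < 1) (a : ℝ) :
    Summable fun k : ℕ => Real.log (1 - a * q ^ k) := by
  simpa [sub_eq_add_neg] using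
    Real.summable_log_one_add_of_summable ((summable_geometric_of_lt_one hq0 hq1).mul_left a).neg

lemma hasProd_qPochInf (hq0 : 0 ≤ q) (hq1 : q < 1) (ha0 : 0 ≤ a) (ha1 : a < 1) :
    HasProd (fun k : ℕ => 1 - a * q ^ k) (qPochInf q a) :=
  (Real.multipliable_of_summable_log (one_sub_mul_pow_pos hq0 hq1.le ha0 ha1)
    (summable_log_one_sub_mul_pow hq0 hq1 a)).hasProd

lemma tendsto_qPoch (hq0 : 0 ≤ q) (hq1 : q < 1) (ha0 : 0 ≤ a) (ha1 : a < 1) :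
    Tendsto (qPoch q a) atTop (𝓝 (qPochInf q a)) :=
  (hasProd_qPochInf hq0 hq1 ha0 ha1).tendsto_prod_nat

lemma qPochInf_pos (hq0 : 0 ≤ q) (hq1 : q < 1) (ha0 : 0 ≤ a) (ha1 : a < 1) :
    0 < qPochInf q a := by
  rw [qPochInf, ← Real.rexp_tsum_eq_tprod (one_sub_mul_pow_pos hq0 hq1.le ha0 ha1)
    (summable_log_one_sub_mul_pow hq0 hq1 a)]
  exact Real.exp_pos _

lemma qPochInf_le_qPoch (hq0 : 0 ≤ q) (hq1 : q < 1) (ha0 : 0 ≤ a) (ha1 : a < 1) (n : ℕ) :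
    qPochInf q a ≤ qPoch q a n :=
  (qPoch_antitone hq0 hq1.le ha0 ha1).le_of_tendsto (tendsto_qPoch hq0 hq1 ha0 ha1) n

end QPochhammer

/-- Euler's q-exponential `e_q(z) = ∑ zᵏ / (q;q)ₖ`. -/
noncomputable def qExp (q z : ℝ) : ℝ := ∑' k : ℕ, z ^ k / qPoch q q k

section QExp

variable {q z : ℝ}

lemma pow_div_qPoch_le (hq0 : 0 < q) (hq1 : q < 1) {x : ℝ} (hx : 0 ≤ x) (hxz : x ≤ z) (k : ℕ) :
    x ^ k / qPoch q q k ≤ z ^ k / qPochInf q q :=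
  div_le_div₀ (pow_nonneg (hx.trans hxz) k) (pow_le_pow_left₀ hx hxz k)
    (qPochInf_pos hq0.le hq1 hq0.le hq1) (qPochInf_le_qPoch hq0.le hq1 hq0.le hq1 k)

lemma summable_pow_div_qPoch (hq0 : 0 < q) (hq1 : q < 1) (hz0 : 0 ≤ z) (hz1 : z < 1) :
    Summable fun k : ℕ => z ^ k / qPoch q q k :=
  ((summable_geometric_of_lt_one hz0 hz1).div_const _).of_nonneg_of_le
    (fun k => div_nonneg (pow_nonneg hz0 k) (qPoch_pos hq0.le hq1.le hq0.le hq1 k).le)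
    (pow_div_qPoch_le hq0 hq1 hz0 le_rfl)

lemma qExp_zero (q : ℝ) : qExp q 0 = 1 := by
  rw [qExp, tsum_eq_single 0 fun k hk => by simp [zero_pow hk]]
  simp [qPoch_zero]

lemma one_sub_mul_qExp (hq0 : 0 < q) (hq1 : q < 1) (hz0 : 0 ≤ z) (hz1 : z < 1) :
    (1 - z) * qExp q z = qExp q (q * z) := by
  have hF := (summable_pow_div_qPoch hq0 hq1 hz0 hz1).hasSum
  have hFq := (summable_pow_div_qPoch hq0 hq1 (mul_nonneg hq0.le hz0)
    (by nlinarith)).hasSum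
  -- `zᵏ (1 - qᵏ) / (q;q)ₖ = z · zᵏ⁻¹ / (q;q)ₖ₋₁`
  have hdiff : HasSum (fun k => z ^ k / qPoch q q k - (q * z) ^ k / qPoch q q k)
      (z * qExp q z) := by
    refine (hasSum_nat_add_iff' 1).1 ?_
    rw [Finset.sum_range_one, pow_zero, pow_zero, sub_self, sub_zero]
    refine (hF.mul_left z).congr_fun fun k => ?_
    have hk : 1 - q * q ^ k ≠ 0 := (one_sub_mul_pow_pos hq0.le hq1.le hq0.le hq1 k).ne'
    rw [qPoch_succ]
    field_simp
    ring
  have hsub := (hF.sub hFq).unique hdiff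
  simp only [qExp] at hsub ⊢
  linarith

lemma qPoch_mul_qExp (hq0 : 0 < q) (hq1 : q < 1) (hz0 : 0 ≤ z) (hz1 : z < 1) (m : ℕ) :
    qPoch q z m * qExp q z = qExp q (q ^ m * z) := by
  induction m with
  | zero => simp [qPoch_zero]
  | succ m ih =>
    have hw : q ^ m * z ≤ z := mul_le_of_le_one_left hz0 (pow_le_one₀ hq0.le hq1.le)
    rw [qPoch_succ, mul_right_comm, ih, pow_succ', mul_assoc,
      ← one_sub_mul_qExp hq0 hq1 (by positivity) (hw.trans_lt hz1)]
    ring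

lemma continuousOn_qExp (hq0 : 0 < q) (hq1 : q < 1) (hz0 : 0 ≤ z) (hz1 : z < 1) :
    ContinuousOn (qExp q) (Icc 0 z) :=
  continuousOn_tsum (fun k => ((continuous_pow k).div_const _).continuousOn)
    ((summable_geometric_of_lt_one hz0 hz1).div_const (qPochInf q q))
    fun k x hx => by
      rw [Real.norm_eq_abs, abs_of_nonneg
        (div_nonneg (pow_nonneg hx.1 k) (qPoch_pos hq0.le hq1.le hq0.le hq1 k).le)]
      exact pow_div_qPoch_le hq0 hq1 hx.1 hx.2 k

theorem qExp_eq_inv_qPochInf (hq0 : 0 < q) (hq1 : q < 1) (hz0 : 0 ≤ z) (hz1 : z < 1) :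
    qExp q z = (qPochInf q z)⁻¹ := by
  have hqm : Tendsto (fun m : ℕ => q ^ m * z) atTop (𝓝[Icc 0 z] 0) := by
    refine tendsto_nhdsWithin_iff.2 ⟨?_, Eventually.of_forall fun m =>
      ⟨by positivity, mul_le_of_le_one_left hz0 (pow_le_one₀ hq0.le hq1.le)⟩⟩
    simpa using (tendsto_pow_atTop_nhds_zero_of_lt_one hq0.le hq1).mul_const z
  have hlim : Tendsto (fun m : ℕ => qPoch q z m * qExp q z) atTop (𝓝 1) := by
    simp_rw [qPoch_mul_qExp hq0 hq1 hz0 hz1, ← qExp_zero q]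
    exact ((continuousOn_qExp hq0 hq1 hz0 hz1) 0 ⟨le_rfl, hz0⟩).tendsto.comp hqm
  have hprod : qPochInf q z * qExp q z = 1 :=
    tendsto_nhds_unique ((tendsto_qPoch hq0.le hq1 hz0 hz1).mul_const _) hlim
  exact eq_inv_of_mul_eq_one_right hprod

end QExp

section QNatural

variable {q u v : ℝ}

lemma qNatural_congr (hq0 : 0 < q) (hu : 0 < u) (hv : 0 < v) {f g : ℝ → ℝ}
    (hfg : ∀ x, 0 < x → f x = g x) : qNatural q f u v = qNatural q g u v := by
  unfold qNatural
  congr 1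
  exact tsum_congr fun k => by rw [hfg _ (by positivity)]

lemma qNatural_const_mul (c : ℝ) (f : ℝ → ℝ) :
    qNatural q (fun x => c * f x) u v = c * qNatural q f u v := by
  simp only [qNatural, mul_left_comm _ c, mul_div_assoc, tsum_mul_left]

lemma qNatural_tsum {f : ℕ → ℝ → ℝ}
    (h : Summable fun p : ℕ × ℕ => q ^ p.2 * f p.1 (u / v * q ^ p.2) / qPoch q q p.2) :
    qNatural q (fun x => ∑' n, f n x) u v = ∑' n, qNatural q (f n) u v := by
  have hswap : ∀ k : ℕ, q ^ k * (∑' n, f n (u / v * q ^ k)) / qPoch q q k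
      = ∑' n, q ^ k * f n (u / v * q ^ k) / qPoch q q k := fun k => by
    rw [← tsum_mul_left, ← tsum_div_const]
  simp only [qNatural, tsum_mul_left]
  rw [tsum_congr hswap,
    Summable.tsum_comm (f := fun n k => q ^ k * f n (u / v * q ^ k) / qPoch q q k) h]

lemma pow_mul_mul_pow_rpow_sub_one (hq : 0 < q) {r : ℝ} (hr : 0 < r) (β : ℝ) (k : ℕ) :
    q ^ k * (r * q ^ k) ^ (β - 1) = r ^ (β - 1) * (q ^ β) ^ k := by
  have hqk : 0 < q ^ k := pow_pos hq k
  rw [Real.mul_rpow hr.le hqk.le, ← Real.rpow_natCast (q ^ β), ← Real.rpow_mul hq.le, mul_comm β,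
    Real.rpow_mul hq.le, Real.rpow_natCast, Real.rpow_sub_one hqk.ne']
  field_simp

theorem qNatural_rpow_sub_one (hq0 : 0 < q) (hq1 : q < 1) (hu : 0 < u) (hv : 0 < v) {β : ℝ}
    (hβ : 0 < β) :
    qNatural q (fun x => x ^ (β - 1)) u v
      = (1 - q) ^ (β - 1) * u ^ (β - 1) / v ^ β * qGamma q β := by
  have hqβ0 : 0 < q ^ β := Real.rpow_pos_of_pos hq0 β
  have hqβ1 : q ^ β < 1 := Real.rpow_lt_one hq0.le hq1 hβ
  have hN : qNatural q (fun x => x ^ (β - 1)) u v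
      = qPochInf q q / v * ((u / v) ^ (β - 1) * qExp q (q ^ β)) := by
    simp only [qNatural, qExp, ← tsum_mul_left, mul_div_assoc,
      pow_mul_mul_pow_rpow_sub_one hq0 (div_pos hu hv)]
  have h1q : 0 < 1 - q := sub_pos.2 hq1
  rw [hN, qExp_eq_inv_qPochInf hq0 hq1 hqβ0.le hqβ1, qGamma, Real.div_rpow hu.le hv.le,
    Real.rpow_sub_one hv.ne', show 1 - β = -(β - 1) by ring, Real.rpow_neg h1q.le]
  field_simp

end QNatural

lemma summable_qNatural_rpow_series {q r α C : ℝ} {A : ℕ → ℝ} (hC : ∀ n, |A n| ≤ C)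
    (hq0 : 0 < q) (hq1 : q < 1) (hr0 : 0 < r) (hr1 : r < 1) (hα : 0 < α) :
    Summable fun p : ℕ × ℕ =>
      q ^ p.2 * (A p.1 * (r * q ^ p.2) ^ (α + p.1 - 1)) / qPoch q q p.2 := by
  have hqα0 : 0 < q ^ α := Real.rpow_pos_of_pos hq0 α
  have hqα1 : q ^ α < 1 := Real.rpow_lt_one hq0.le hq1 hα
  have hPinf := qPochInf_pos hq0.le hq1 hq0.le hq1
  have hdom : Summable fun p : ℕ × ℕ =>
      C * r ^ (α - 1) * (r ^ p.1 * ((q ^ α) ^ p.2 / qPochInf q q)) :=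
    ((summable_geometric_of_lt_one hr0.le hr1).mul_of_nonneg
      ((summable_geometric_of_lt_one hqα0.le hqα1).div_const _) (fun n => by positivity)
      (fun k => by positivity)).mul_left _
  refine hdom.of_norm_bounded fun ⟨n, k⟩ => ?_
  have hterm : q ^ k * (A n * (r * q ^ k) ^ (α + n - 1)) / qPoch q q k
      = A n * r ^ (α - 1) * r ^ n * ((q ^ (α + n)) ^ k / qPoch q q k) := by
    rw [mul_left_comm, pow_mul_mul_pow_rpow_sub_one hq0 hr0, add_sub_right_comm,
      Real.rpow_add_natCast hr0.ne']
    ring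
  have hle : (q ^ (α + n)) ^ k / qPoch q q k ≤ (q ^ α) ^ k / qPochInf q q :=
    pow_div_qPoch_le hq0 hq1 (by positivity)
      (Real.rpow_le_rpow_of_exponent_ge hq0 hq1.le (by simp)) k
  have hPk := qPoch_pos hq0.le hq1.le hq0.le hq1 k
  have hX : 0 ≤ (q ^ (α + n)) ^ k / qPoch q q k := by positivity
  rw [hterm, Real.norm_eq_abs, abs_mul, abs_of_nonneg hX, abs_mul, abs_mul,
    abs_of_pos (pow_pos hr0 n), abs_of_pos (Real.rpow_pos_of_pos hr0 _)]
  have hAr : 0 ≤ |A n| * r ^ (α - 1) * r ^ n := by positivity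
  have hCr : |A n| * r ^ (α - 1) * r ^ n ≤ C * r ^ (α - 1) * r ^ n := by
    gcongr
    exact hC n
  calc |A n| * r ^ (α - 1) * r ^ n * ((q ^ (α + n)) ^ k / qPoch q q k)
      ≤ C * r ^ (α - 1) * r ^ n * ((q ^ α) ^ k / qPochInf q q) :=
        mul_le_mul hCr hle hX (hAr.trans hCr)
    _ = C * r ^ (α - 1) * (r ^ n * ((q ^ α) ^ k / qPochInf q q)) := by ring

/-- For `0 < q < 1`, `u, v > 0`, `α > 0`, a bounded sequence `A` and
`f(x) = ∑_{n≥0} A_n x^n`, if `u/v < 1` then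
`N_q(x^{α-1} f(x))(u;v) = ((1-q)^{α-1} u^{α-1}/v^α) ∑_{n≥0} A_n (u/v)^n (1-q)^n Γ_q(α+n)`. -/
theorem qNatural_rpow_mul_series (q u v α : ℝ) (A : ℕ → ℝ)
    (hA : ∃ C : ℝ, ∀ n : ℕ, |A n| ≤ C)
    (hq0 : 0 < q) (hq1 : q < 1) (hu : 0 < u) (hv : 0 < v) (hα : 0 < α)
    (huv : u / v < 1) :
    qNatural q (fun x => x ^ (α - 1) * ∑' n : ℕ, A n * x ^ n) u v
      = (1 - q) ^ (α - 1) * u ^ (α - 1) / v ^ α *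
        ∑' n : ℕ, A n * (u / v) ^ n * (1 - q) ^ n * qGamma q (α + n) := by
  obtain ⟨C, hC⟩ := hA
  have hseries : ∀ x, 0 < x →
      x ^ (α - 1) * ∑' n : ℕ, A n * x ^ n = ∑' n : ℕ, A n * x ^ (α + n - 1) := fun x hx => by
    rw [← tsum_mul_left]
    refine tsum_congr fun n => ?_
    rw [add_sub_right_comm, Real.rpow_add_natCast hx.ne']
    ring
  have hterm : ∀ n : ℕ, qNatural q (fun x => A n * x ^ (α + n - 1)) u v
      = (1 - q) ^ (α - 1) * u ^ (α - 1) / v ^ α *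
        (A n * (u / v) ^ n * (1 - q) ^ n * qGamma q (α + n)) := fun n => by
    rw [qNatural_const_mul, qNatural_rpow_sub_one hq0 hq1 hu hv (by positivity),
      add_sub_right_comm, Real.rpow_add_natCast (sub_pos.2 hq1).ne',
      Real.rpow_add_natCast hu.ne', Real.rpow_add_natCast hv.ne', div_pow]
    field_simp
  rw [qNatural_congr hq0 hu hv hseries,
    qNatural_tsum (f := fun n x => A n * x ^ (α + n - 1))
      (summable_qNatural_rpow_series hC hq0 hq1 (div_pos hu hv) huv hα),
    tsum_congr hterm, tsum_mul_left]
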